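/- Let ρ satisfy (C1)-(C4) and subadditivity (P1). For any adapted process H, any ρ-martingale M, and any stopping time τ with t ≤ τ ≤ T a.s., it holds that ρ_t(H_τ) ≤ ρ_t(H_τ + M_t − M_τ). -/

import Mathlib

/-!
Write `τ ∧ s` for `min τ s`. Backward induction from `s = T` shows `ρ_s(M_τ) = M_{τ ∧ s}`: the
stopped martingale moves from `s` to `s + 1` only on the `F_s`-event `{s < τ}`, by the increment
`M_{s+1} - M_s`, which regularity, translation invariance and the martingale property send to `0`
under `ρ_s`. At `s = t ≤ τ` this is optional sampling, `ρ_t(M_τ) = M_t`, and subadditivity gives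
`ρ_t(H_τ) ≤ ρ_t(H_τ + M_t - M_τ) + ρ_t(M_τ - M_t) = ρ_t(H_τ + M_t - M_τ)`.
-/

open MeasureTheory

section OnePeriod

variable {Ω : Type*} {m₀ : MeasurableSpace Ω} {r : (Ω → ℝ) → Ω → ℝ}

theorem map_zero_of_map_indicator
    (hreg : ∀ (X : Ω → ℝ) (A : Set Ω), MeasurableSet[m₀] A →
      r (A.indicator X) = A.indicator (r X)) :
    r 0 = 0 := by
  have h := hreg 0 ∅ MeasurableSet.empty
  rwa [Set.indicator_empty', Set.indicator_empty'] at h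

theorem map_sub_of_measurable (hcti : ∀ X Y : Ω → ℝ, Measurable[m₀] Y → r (X + Y) = r X + Y)
    (X : Ω → ℝ) {Y : Ω → ℝ} (hY : Measurable[m₀] Y) : r (X - Y) = r X - Y := by
  simpa [sub_eq_add_neg] using hcti X (-Y) hY.neg

theorem map_eq_self_of_measurable
    (hreg : ∀ (X : Ω → ℝ) (A : Set Ω), MeasurableSet[m₀] A → r (A.indicator X) = A.indicator (r X))
    (hcti : ∀ X Y : Ω → ℝ, Measurable[m₀] Y → r (X + Y) = r X + Y)
    {Y : Ω → ℝ} (hY : Measurable[m₀] Y) : r Y = Y := by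
  simpa [map_zero_of_map_indicator hreg] using hcti 0 Y hY

theorem map_indicator_sub_add_eq
    (hreg : ∀ (X : Ω → ℝ) (A : Set Ω), MeasurableSet[m₀] A → r (A.indicator X) = A.indicator (r X))
    (hcti : ∀ X Y : Ω → ℝ, Measurable[m₀] Y → r (X + Y) = r X + Y)
    {A : Set Ω} (hA : MeasurableSet[m₀] A) {X Y Z : Ω → ℝ} (hY : Measurable[m₀] Y)
    (hZ : Measurable[m₀] Z) (hXY : r X = Y) :
    r (A.indicator (X - Y) + Z) = Z := by
  rw [hcti _ Z hZ, hreg _ A hA, map_sub_of_measurable hcti X hY, hXY, sub_self,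
    Set.indicator_zero', zero_add]

theorem map_le_map_add_sub (hcti : ∀ X Y : Ω → ℝ, Measurable[m₀] Y → r (X + Y) = r X + Y)
    (hsub : ∀ X Y : Ω → ℝ, r (X + Y) ≤ r X + r Y) {Y N : Ω → ℝ} (hY : Measurable[m₀] Y)
    (hN : r N = Y) (X : Ω → ℝ) : r X ≤ r (X + Y - N) :=
  calc r X = r ((X + Y - N) + (N - Y)) := by rw [sub_add_sub_cancel, add_sub_cancel_right]
    _ ≤ r (X + Y - N) + r (N - Y) := hsub _ _
    _ = r (X + Y - N) := by rw [map_sub_of_measurable hcti N hY, hN, sub_self, add_zero]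

end OnePeriod

theorem stoppedProcess_add_one {Ω β : Type*} [AddCommGroup β] (u : ℕ → Ω → β)
    (τ : Ω → WithTop ℕ) (k : ℕ) :
    stoppedProcess u τ (k + 1)
      = {ω | (k : WithTop ℕ) < τ ω}.indicator (u (k + 1) - u k) + stoppedProcess u τ k := by
  ext ω
  by_cases h : (k : WithTop ℕ) < τ ω
  · -- `WithTop ℕ` has no `SuccAddOrder` instance, but its synonym `ℕ∞` does.
    have hk1 : ((k + 1 : ℕ) : WithTop ℕ) ≤ τ ω := Order.add_one_le_of_lt (α := ℕ∞) h
    rw [Pi.add_apply, Set.indicator_of_mem (s := {ω | (k : WithTop ℕ) < τ ω}) h,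
      stoppedProcess_eq_of_le (i := k + 1) hk1, stoppedProcess_eq_of_le (i := k) h.le,
      Pi.sub_apply, sub_add_cancel]
  · have hk1 : τ ω ≤ ((k + 1 : ℕ) : WithTop ℕ) := (not_lt.mp h).trans (by simp)
    rw [Pi.add_apply, Set.indicator_of_notMem (s := {ω | (k : WithTop ℕ) < τ ω}) h,
      stoppedProcess_eq_of_ge (i := k + 1) hk1, stoppedProcess_eq_of_ge (i := k) (not_lt.mp h),
      zero_add]

section OptionalSampling

variable {Ω : Type*} {m : MeasurableSpace Ω} {F : Filtration ℕ m} {T : ℕ}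
  {ρ : ℕ → (Ω → ℝ) → Ω → ℝ} {M : ℕ → Ω → ℝ} {τ : Ω → WithTop ℕ}

theorem rho_stoppedValue_eq_stoppedProcess
    (hreg : ∀ s ≤ T, ∀ (X : Ω → ℝ) (A : Set Ω), MeasurableSet[F s] A →
      ρ s (A.indicator X) = A.indicator (ρ s X))
    (hrec : ∀ s < T, ∀ X : Ω → ℝ, ρ s (ρ (s + 1) X) = ρ s X)
    (hcti : ∀ s ≤ T, ∀ X Y : Ω → ℝ, Measurable[F s] Y → ρ s (X + Y) = ρ s X + Y)
    (hM : ∀ s, Measurable[F s] (M s)) (hMmart : ∀ s < T, M s = ρ s (M (s + 1)))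
    (hτ : IsStoppingTime F τ) (hτT : ∀ ω, τ ω ≤ T) {s : ℕ} (hs : s ≤ T) :
    ρ s (stoppedValue M τ) = stoppedProcess M τ s := by
  have hMs : StronglyAdapted F M := fun k => (hM k).stronglyMeasurable
  have hstopped : ∀ k, Measurable[F k] (stoppedProcess M τ k) := fun k =>
    (hMs.stoppedProcess_of_discrete hτ k).measurable
  induction hs using Nat.decreasingInduction with
  | self =>
    have hT : stoppedValue M τ = stoppedProcess M τ T :=
      funext fun ω => (stoppedProcess_eq_of_ge (hτT ω)).symm
    rw [hT]
    exact map_eq_self_of_measurable (hreg T le_rfl) (hcti T le_rfl) (hstopped T)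
  | of_succ k hk ih =>
    rw [← hrec k hk, ih, stoppedProcess_add_one]
    exact map_indicator_sub_add_eq (hreg k hk.le) (hcti k hk.le) (hτ.measurableSet_gt k)
      (hM k) (hstopped k) (hMmart k hk).symm

theorem rho_stoppedValue_eq_of_le
    (hreg : ∀ s ≤ T, ∀ (X : Ω → ℝ) (A : Set Ω), MeasurableSet[F s] A →
      ρ s (A.indicator X) = A.indicator (ρ s X))
    (hrec : ∀ s < T, ∀ X : Ω → ℝ, ρ s (ρ (s + 1) X) = ρ s X)
    (hcti : ∀ s ≤ T, ∀ X Y : Ω → ℝ, Measurable[F s] Y → ρ s (X + Y) = ρ s X + Y)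
    (hM : ∀ s, Measurable[F s] (M s)) (hMmart : ∀ s < T, M s = ρ s (M (s + 1)))
    (hτ : IsStoppingTime F τ) (hτT : ∀ ω, τ ω ≤ T) {t : ℕ} (ht : t ≤ T) (htτ : ∀ ω, t ≤ τ ω) :
    ρ t (stoppedValue M τ) = M t := by
  rw [rho_stoppedValue_eq_stoppedProcess hreg hrec hcti hM hMmart hτ hτT ht]
  exact funext fun ω => stoppedProcess_eq_of_le (htτ ω)

end OptionalSampling

theorem dmu_martingale_shift_inequality_general
    {Ω : Type*} {m : MeasurableSpace Ω}
    (F : MeasureTheory.Filtration ℕ m) (T : ℕ)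
    (ρ : ℕ → (Ω → ℝ) → (Ω → ℝ))
    (hreg : ∀ s, s ≤ T → ∀ (X : Ω → ℝ) (A : Set Ω), MeasurableSet[F s] A →
      ρ s (A.indicator X) = A.indicator (ρ s X))
    (hrec : ∀ s, s < T → ∀ (X : Ω → ℝ), ρ s (ρ (s + 1) X) = ρ s X)
    (hcti : ∀ s, s ≤ T → ∀ (X Y : Ω → ℝ), Measurable[F s] Y →
      ρ s (X + Y) = ρ s X + Y)
    (hsub : ∀ s, s ≤ T → ∀ (X Y : Ω → ℝ), ρ s (X + Y) ≤ ρ s X + ρ s Y)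
    (H : ℕ → Ω → ℝ)
    (M : ℕ → Ω → ℝ) (hMadapted : ∀ s, Measurable[F s] (M s))
    (hMmart : ∀ s, s < T → M s = ρ s (M (s + 1)))
    (t : ℕ) (ht : t ≤ T)
    (τ : Ω → ℕ) (hτ : ∀ j, MeasurableSet[F j] {ω | τ ω = j})
    (hτb : ∀ ω, t ≤ τ ω ∧ τ ω ≤ T) :
    ρ t (fun ω => H (τ ω) ω)
      ≤ ρ t (fun ω => H (τ ω) ω + M t ω - M (τ ω) ω) := by
  have hτ' : IsStoppingTime F fun ω => (τ ω : WithTop ℕ) :=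
    isStoppingTime_of_measurableSet_eq (by simpa using hτ)
  have hsampling : ρ t (fun ω => M (τ ω) ω) = M t :=
    rho_stoppedValue_eq_of_le hreg hrec hcti hMadapted hMmart hτ'
      (fun ω => WithTop.coe_le_coe.mpr (hτb ω).2) ht (fun ω => WithTop.coe_le_coe.mpr (hτb ω).1)
  exact map_le_map_add_sub (hcti t ht) (hsub t ht) (hMadapted t) hsampling _

/-- Let `ρ` satisfy (C1)–(C4) and subadditivity (P1). For any adapted process
`H`, any `ρ`-martingale `M`, and any stopping time `τ` with `t ≤ τ ≤ T`,
one has `ρ_t (H_τ) ≤ ρ_t (H_τ + M_t - M_τ)`. -/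
theorem dmu_martingale_shift_inequality
    {Ω : Type*} {m : MeasurableSpace Ω}
    (F : MeasureTheory.Filtration ℕ m) (T : ℕ)
    (ρ : ℕ → (Ω → ℝ) → (Ω → ℝ))
    (hmeas : ∀ s (X : Ω → ℝ), Measurable[F s] (ρ s X))
    (hmono : ∀ s, s ≤ T → ∀ (X Y : Ω → ℝ), X ≤ Y → ρ s X ≤ ρ s Y)
    (hreg : ∀ s, s ≤ T → ∀ (X : Ω → ℝ) (A : Set Ω), MeasurableSet[F s] A →
      ρ s (A.indicator X) = A.indicator (ρ s X))
    (hrec : ∀ s, s < T → ∀ (X : Ω → ℝ), ρ s (ρ (s + 1) X) = ρ s X)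
    (hcti : ∀ s, s ≤ T → ∀ (X Y : Ω → ℝ), Measurable[F s] Y →
      ρ s (X + Y) = ρ s X + Y)
    (hsub : ∀ s, s ≤ T → ∀ (X Y : Ω → ℝ), ρ s (X + Y) ≤ ρ s X + ρ s Y)
    (H : ℕ → Ω → ℝ) (hHadapted : ∀ s, Measurable[F s] (H s))
    (M : ℕ → Ω → ℝ) (hMadapted : ∀ s, Measurable[F s] (M s))
    (hMmart : ∀ s, s < T → M s = ρ s (M (s + 1)))
    (t : ℕ) (ht : t ≤ T)
    (τ : Ω → ℕ) (hτ : ∀ j, MeasurableSet[F j] {ω | τ ω = j})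
    (hτb : ∀ ω, t ≤ τ ω ∧ τ ω ≤ T) :
    ρ t (fun ω => H (τ ω) ω)
      ≤ ρ t (fun ω => H (τ ω) ω + M t ω - M (τ ω) ω) :=
  dmu_martingale_shift_inequality_general F T ρ hreg hrec hcti hsub H M hMadapted hMmart t ht τ hτ
    hτb
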